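/- Let P₄ be the path with vertices a, b, c, d and edges ab, bc, cd, so A(P₄) = ⟨a,b,c,d ∣ [a,b], [b,c], [c,d]⟩. Let F₃ be the free group on generators x, y, z. Then the homomorphism φ : F₃ → A(P₄) defined by x ↦ a, y ↦ bc, z ↦ d is injective. -/

import Mathlib

open scoped commutatorElement

/-- The defining relators of the right-angled Artin group on a simple graph `G`:
the commutators of the generators corresponding to adjacent vertices. -/
def raagRels {V : Type*} (G : SimpleGraph V) : Set (FreeGroup V) :=
  {r | ∃ u v : V, G.Adj u v ∧ r = ⁅FreeGroup.of u, FreeGroup.of v⁆}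

/-- The right-angled Artin group on a simple graph `G`. -/
abbrev RAAG {V : Type*} (G : SimpleGraph V) : Type _ := PresentedGroup (raagRels G)

/-- The generator of the right-angled Artin group corresponding to a vertex. -/
def gen {V : Type*} (G : SimpleGraph V) (v : V) : RAAG G := PresentedGroup.of v

/-- Vertices of the path P₄. -/
inductive VP : Type | a | b | c | d
deriving DecidableEq

/-- The path graph P₄ with edges ab, bc, cd. -/
def P4 : SimpleGraph VP := SimpleGraph.fromRel (fun u v => (u, v) ∈
  ([(.a,.b),(.b,.c),(.c,.d)] : List (VP × VP)))

/-!
The path `a – b – c` gives `A(P₃) ≅ F(a, c) × ⟨b⟩`, and `A(P₄)` maps to the HNN extension of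
`A(P₃)` along the identity of `⟨c⟩`, with stable letter `d`. Under this map `x ↦ a`, `y ↦ bc`,
`z ↦ d`, and the subgroup `K = ⟨a, bc⟩` of the base is free (its projection to `F(a, c)` is an
isomorphism) and meets `⟨c⟩` trivially (`(bc)ⁿ` has `b`-exponent `n`). For any such `K`, Britton's
lemma shows that `K` and the stable letter generate `K ∗ ⟨t⟩`: a pinch `t^u k t^-u` needs
`k ∈ K ∩ ⟨c⟩ = 1`, and `t^u t^-u` does not occur in a reduced word.
-/

namespace FreeGroup

theorem IsReduced.eq_nil_of_mk_eq_one {α : Type*} {L : List (α × Bool)}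
    (hL : IsReduced L) (h : mk L = 1) : L = [] := by
  classical
  rw [← hL.reduce_eq, ← toWord_mk, h, toWord_one]

theorem IsReduced.of_map {α β : Type*} {g : α → β} {L : List (α × Bool)}
    (h : IsReduced (L.map fun x => (g x.1, x.2))) : IsReduced L :=
  List.isChain_of_isChain_map _ (fun _ _ hr hab => hr (congrArg g hab)) h

theorem disjoint_range_prod_zpowers {ι : Type*} (e : FreeGroup ι →* Multiplicative ℤ) (i : ι)
    (he : e (of i) = Multiplicative.ofAdd 1) :
    Disjoint ((MonoidHom.id _).prod e).range
      (Subgroup.zpowers ((of i, 1) : FreeGroup ι × Multiplicative ℤ)) := by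
  rw [Subgroup.disjoint_def]
  rintro _ ⟨w, rfl⟩ ⟨k, hk⟩
  simp only [Prod.ext_iff, Prod.pow_fst, Prod.pow_snd, one_zpow, MonoidHom.prod_apply,
    MonoidHom.id_apply] at hk
  obtain ⟨rfl, hk⟩ := hk
  have hk0 : k = 0 := by simpa [he, ← ofAdd_zsmul] using hk.symm
  simp [hk0]

end FreeGroup

section splitAtNone

open FreeGroup

/-- Cuts a word over `Option ι` at its letters `none`: the word `w₀ t^u₁ w₁ ⋯ t^uₙ wₙ`, with the
`wᵢ` words over `ι`, becomes `(w₀, [(u₁, w₁), …, (uₙ, wₙ)])`. -/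
def splitAtNone {ι : Type*} :
    List (Option ι × Bool) → List (ι × Bool) × List (ℤˣ × List (ι × Bool))
  | [] => ([], [])
  | (none, b) :: L => ([], (if b then 1 else -1, (splitAtNone L).1) :: (splitAtNone L).2)
  | (some i, b) :: L => ((i, b) :: (splitAtNone L).1, (splitAtNone L).2)

variable {ι : Type*}

theorem splitAtNone_fst_prefix (L : List (Option ι × Bool)) :
    ((splitAtNone L).1.map fun x => (some x.1, x.2)) <+: L := by
  match L with
  | [] => exact List.nil_prefix
  | (none, b) :: L => exact List.nil_prefix
  | (some i, b) :: L => exact (List.prefix_cons_inj _).2 (splitAtNone_fst_prefix L)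

theorem eq_map_of_splitAtNone_snd_eq_nil {L : List (Option ι × Bool)}
    (h : (splitAtNone L).2 = []) : L = (splitAtNone L).1.map fun x => (some x.1, x.2) := by
  match L with
  | [] => rfl
  | (none, b) :: L => simp [splitAtNone] at h
  | (some i, b) :: L =>
    simp only [splitAtNone] at h ⊢
    rw [List.map_cons, ← eq_map_of_splitAtNone_snd_eq_nil h]

theorem isChain_splitAtNone_snd {L : List (Option ι × Bool)} (hL : IsReduced L) :
    (splitAtNone L).2.IsChain fun p q => mk p.2 = 1 → p.1 = q.1 := by
  match L with
  | [] => exact List.isChain_nil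
  | (some i, b) :: L =>
    exact isChain_splitAtNone_snd (L := L) (hL.infix (List.suffix_cons _ L).isInfix)
  | (none, b) :: L =>
    refine List.isChain_cons.2 ⟨fun q hq hq1 => ?_,
      isChain_splitAtNone_snd (hL.infix (List.suffix_cons _ L).isInfix)⟩
    match L, hL with
    | [], _ => simp [splitAtNone] at hq
    | (some j, b') :: L, hL =>
      have hred : IsReduced (splitAtNone ((some j, b') :: L)).1 :=
        (hL.infix ((splitAtNone_fst_prefix _).isInfix.trans
          (List.suffix_cons _ _).isInfix)).of_map
      simpa [splitAtNone] using hred.eq_nil_of_mk_eq_one hq1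
    | (none, b') :: L, hL =>
      simp only [splitAtNone, List.head?_cons, Option.mem_def, Option.some.injEq] at hq
      subst hq
      obtain rfl : b = b' := (isReduced_cons_cons.1 hL).1 rfl
      rfl

end splitAtNone

namespace HNNExtension

open FreeGroup

variable {G : Type*} [Group G] {A B : Subgroup G} {ι : Type*}

noncomputable def liftOptionT (φ : A ≃* B) (f : FreeGroup ι →* G) :
    FreeGroup (Option ι) →* HNNExtension G A B φ :=
  FreeGroup.lift fun o => o.elim t fun i => of (f (FreeGroup.of i))

theorem liftOptionT_comp_map_some (φ : A ≃* B) (f : FreeGroup ι →* G) :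
    (liftOptionT φ f).comp (FreeGroup.map some) = of.comp f := by
  ext i
  simp [liftOptionT]

theorem liftOptionT_mk (φ : A ≃* B) (f : FreeGroup ι →* G) (L : List (Option ι × Bool)) :
    liftOptionT φ f (mk L) = of (f (mk (splitAtNone L).1)) *
      ((splitAtNone L).2.map fun p => t ^ (p.1 : ℤ) * of (f (mk p.2))).prod := by
  have mk_cons {α : Type _} (x : α × Bool) (L : List (α × Bool)) :
      mk (x :: L) = mk [x] * mk L := rfl
  match L with
  | [] => simp [splitAtNone, ← one_eq_mk]
  | (none, b) :: L =>
    rw [mk_cons, _root_.map_mul, liftOptionT_mk φ f L]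
    cases b <;> simp [splitAtNone, liftOptionT, mul_assoc, ← one_eq_mk]
  | (some i, b) :: L =>
    have hsome : mk [(some i, b)] = FreeGroup.map some (mk [(i, b)]) := by rw [map.mk]; rfl
    rw [mk_cons, _root_.map_mul, liftOptionT_mk φ f L, hsome, ← MonoidHom.comp_apply,
      liftOptionT_comp_map_some, MonoidHom.comp_apply, ← mul_assoc, ← _root_.map_mul,
      ← _root_.map_mul, mk_cons (i, b)]
    rfl

theorem liftOptionT_injective (φ : A ≃* B) {f : FreeGroup ι →* G} (hf : Function.Injective f)
    (hA : Disjoint f.range A) (hB : Disjoint f.range B) :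
    Function.Injective (liftOptionT φ f) := by
  classical
  rw [injective_iff_map_eq_one]
  intro w hw
  obtain ⟨L, hL, rfl⟩ : ∃ L, IsReduced L ∧ mk L = w := ⟨w.toWord, isReduced_toWord, mk_toWord⟩
  have trivial_of_mem (x : FreeGroup ι) (u : ℤˣ) (hx : f x ∈ toSubgroup A B u) : x = 1 := by
    refine hf (Eq.trans ?_ f.map_one.symm)
    rcases Int.units_eq_one_or u with rfl | rfl
    · exact Subgroup.disjoint_def.1 hA ⟨x, rfl⟩ hx
    · exact Subgroup.disjoint_def.1 hB ⟨x, rfl⟩ hx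
  let R : NormalWord.ReducedWord G A B :=
    ⟨f (mk (splitAtNone L).1), (splitAtNone L).2.map fun p => (p.1, f (mk p.2)),
      List.isChain_map_of_isChain _ (fun _ _ h hp => h (trivial_of_mem _ _ hp))
        (isChain_splitAtNone_snd hL)⟩
  have hR : R.prod φ = 1 := by
    rw [← hw, liftOptionT_mk]
    simp only [R, NormalWord.ReducedWord.prod, List.map_map]
    rfl
  have hnil : (splitAtNone L).2 = [] := by
    simpa [R] using ReducedWord.toList_eq_nil_of_mem_of_range φ R (hR ▸ one_mem _)
  have hhead : f (mk (splitAtNone L).1) = 1 :=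
    (of_injective φ).eq_iff.1 (by simpa [R, NormalWord.ReducedWord.prod, hnil] using hR)
  rw [eq_map_of_splitAtNone_snd_eq_nil hnil, ← map.mk, hf (hhead.trans f.map_one.symm),
    _root_.map_one]

end HNNExtension

def RAAG.lift {V H : Type*} [Group H] {Γ : SimpleGraph V} (F : V → H)
    (hF : ∀ u v, Γ.Adj u v → Commute (F u) (F v)) : RAAG Γ →* H :=
  PresentedGroup.toGroup <| by
    rintro _ ⟨u, v, huv, rfl⟩
    rw [map_commutatorElement, commutatorElement_eq_one_iff_commute, FreeGroup.lift_apply_of,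
      FreeGroup.lift_apply_of]
    exact hF u v huv

@[simp]
theorem RAAG.lift_gen {V H : Type*} [Group H] {Γ : SimpleGraph V} (F : V → H)
    (hF : ∀ u v, Γ.Adj u v → Commute (F u) (F v)) (v : V) : RAAG.lift F hF (gen Γ v) = F v :=
  PresentedGroup.toGroup.of _

theorem commute_of_P4_adj {H : Type*} [Group H] {F : VP → H} (hab : Commute (F .a) (F .b))
    (hbc : Commute (F .b) (F .c)) (hcd : Commute (F .c) (F .d)) :
    ∀ u v, P4.Adj u v → Commute (F u) (F v) := by
  intro u v h
  cases u <;> cases v <;> simp [P4] at h <;> first | assumption | exact Commute.symm ‹_›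

/-- `A(P₃) ≅ F(a, c) × ⟨b⟩` for the path `a – b – c`; the free generators `0` and `1` are `a`
and `c`. -/
abbrev RAAGP3 : Type := FreeGroup (Fin 2) × Multiplicative ℤ

abbrev RAAGP3.c : RAAGP3 := (FreeGroup.of 1, 1)

abbrev P4HNN : Type :=
  HNNExtension RAAGP3 (Subgroup.zpowers RAAGP3.c) (Subgroup.zpowers RAAGP3.c) (MulEquiv.refl _)

noncomputable def P4.toHNN : RAAG P4 →* P4HNN :=
  RAAG.lift
    (fun | .a => HNNExtension.of (FreeGroup.of 0, 1) | .b => HNNExtension.of (1, .ofAdd 1)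
         | .c => HNNExtension.of RAAGP3.c | .d => HNNExtension.t)
    (commute_of_P4_adj
      ((Commute.prod (Commute.one_right _) (Commute.one_left _)).map HNNExtension.of)
      ((Commute.prod (Commute.one_left _) (Commute.one_right _)).map HNNExtension.of)
      (HNNExtension.t_mul_of (φ := MulEquiv.refl _) ⟨RAAGP3.c, Subgroup.mem_zpowers _⟩).symm)

/-- `x ↦ a`, `y ↦ bc`. -/
def xyToRAAGP3 : FreeGroup (Fin 2) →* RAAGP3 :=
  (MonoidHom.id _).prod (FreeGroup.lift ![1, .ofAdd 1])

theorem xyToRAAGP3_injective : Function.Injective xyToRAAGP3 :=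
  fun _ _ h => congrArg Prod.fst h

theorem disjoint_range_xyToRAAGP3 : Disjoint xyToRAAGP3.range (Subgroup.zpowers RAAGP3.c) :=
  FreeGroup.disjoint_range_prod_zpowers _ 1 (by simp)

theorem P4.toHNN_comp_lift :
    P4.toHNN.comp (FreeGroup.lift ![gen P4 VP.a, gen P4 VP.b * gen P4 VP.c, gen P4 VP.d]) =
      (HNNExtension.liftOptionT _ xyToRAAGP3).comp
        (FreeGroup.freeGroupCongr finSuccEquivLast).toMonoidHom := by
  ext i
  fin_cases i
  · rfl
  · show P4.toHNN (gen P4 .b * gen P4 .c) = HNNExtension.of (xyToRAAGP3 (FreeGroup.of 1))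
    rw [_root_.map_mul, P4.toHNN, RAAG.lift_gen, RAAG.lift_gen, ← _root_.map_mul]
    rfl
  · rfl

/-- The homomorphism `φ : F₃ → A(P₄)` defined by `x ↦ a`, `y ↦ bc`, `z ↦ d` is
injective. -/
theorem F3_embeds_in_raag_P4 :
    Function.Injective
      (FreeGroup.lift ![gen P4 VP.a, gen P4 VP.b * gen P4 VP.c, gen P4 VP.d] :
        FreeGroup (Fin 3) →* RAAG P4) := by
  have h := (HNNExtension.liftOptionT_injective (MulEquiv.refl _) xyToRAAGP3_injective
    disjoint_range_xyToRAAGP3 disjoint_range_xyToRAAGP3).comp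
    (FreeGroup.freeGroupCongr finSuccEquivLast).injective
  rw [← MulEquiv.coe_toMonoidHom, ← MonoidHom.coe_comp, ← P4.toHNN_comp_lift,
    MonoidHom.coe_comp] at h
  exact h.of_comp
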